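/- Fix ε ∈ (0, 1/2) and δ > 0, and let (ℓₙ, uₙ) be a sequence with g_ε(ℓₙ, uₙ) = δ for all n, uₙ ↑ +∞, and ℓₙ bounded. Then ℓₙ → ℓ*, where ℓ* is the unique solution of g(ℓ) = δ with g(ℓ) = ∫₀^∞ max{ε − Φ(ℓ + t), 0} dt. -/

import Mathlib

open MeasureTheory Set

/-- The standard Gaussian cumulative distribution function. -/
noncomputable def Phi (x : ℝ) : ℝ :=
  (∫ s in Set.Iic x, Real.exp (-s ^ 2 / 2)) / Real.sqrt (2 * Real.pi)

/-- `g ε ℓ u = ∫₀^∞ max{Φ(u − t) − Φ(ℓ + t) − (1 − ε), 0} dt`. -/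
noncomputable def g (ε ℓ u : ℝ) : ℝ :=
  ∫ t in Set.Ioi (0:ℝ), max (Phi (u - t) - Phi (ℓ + t) - (1 - ε)) 0

/-- `g̲(ℓ) = ∫₀^∞ max{ε − Φ(ℓ + t), 0} dt`. -/
noncomputable def gunder (ε ℓ : ℝ) : ℝ :=
  ∫ t in Set.Ioi (0:ℝ), max (ε - Phi (ℓ + t)) 0


/-! Dominated convergence: once `ℓ + t` passes a point where `Φ ≥ ε`, the integrand of `g ε ℓ u`
vanishes, so for `ℓ` bounded below the integrands are dominated by the indicator of a fixed
interval; pointwise, `Φ(u − t) → 1` as `u → ∞`, which turns the integrand of `g` into that of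
`gunder`. Hence `g ε ℓₙ uₙ → gunder ε L` whenever `ℓₙ → L` and `uₙ → ∞`, so every limit point
of the bounded sequence `ℓₙ` solves `gunder ε ℓ = δ` and equals `ℓ*`. -/

open Filter Topology

lemma integrable_exp_neg_sq_div_two : Integrable fun s : ℝ => Real.exp (-s ^ 2 / 2) := by
  simpa [neg_div, div_eq_inv_mul] using integrable_exp_neg_mul_sq (b := 1 / 2) (by norm_num)

lemma integral_exp_neg_sq_div_two : ∫ s : ℝ, Real.exp (-s ^ 2 / 2) = Real.sqrt (2 * Real.pi) := by
  have h := integral_gaussian (1 / 2)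
  rw [show Real.pi / (1 / 2) = 2 * Real.pi by ring] at h
  simpa [neg_div, div_eq_inv_mul] using h

lemma sqrt_two_mul_pi_pos : 0 < Real.sqrt (2 * Real.pi) :=
  Real.sqrt_pos.2 (by positivity)

lemma Phi_nonneg (x : ℝ) : 0 ≤ Phi x :=
  div_nonneg (setIntegral_nonneg measurableSet_Iic fun _ _ => (Real.exp_pos _).le)
    sqrt_two_mul_pi_pos.le

lemma Phi_le_one (x : ℝ) : Phi x ≤ 1 := by
  rw [Phi, div_le_one sqrt_two_mul_pi_pos, ← integral_exp_neg_sq_div_two]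
  exact setIntegral_le_integral integrable_exp_neg_sq_div_two
    (Eventually.of_forall fun _ => (Real.exp_pos _).le)

lemma monotone_Phi : Monotone Phi := by
  intro a b hab
  have h := setIntegral_mono_set integrable_exp_neg_sq_div_two.integrableOn
    (Eventually.of_forall fun _ => (Real.exp_pos _).le) (Iic_subset_Iic.2 hab).eventuallyLE
  exact div_le_div_of_nonneg_right h sqrt_two_mul_pi_pos.le

lemma continuous_Phi : Continuous Phi := by
  refine Continuous.div_const (continuous_iff_continuousAt.2 fun x => ?_) _
  exact (integrable_exp_neg_sq_div_two.integrableOn.continuousOn_Iic_primitive_Iic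
    (a₀ := x + 1)).continuousAt (Iic_mem_nhds (lt_add_one x))

lemma tendsto_Phi_atTop : Tendsto Phi atTop (𝓝 1) := by
  have h := ((aecover_Iic tendsto_id).integral_tendsto_of_countably_generated
    integrable_exp_neg_sq_div_two).div_const (Real.sqrt (2 * Real.pi))
  rwa [integral_exp_neg_sq_div_two, div_self sqrt_two_mul_pi_pos.ne'] at h

noncomputable def gIntegrand (ε ℓ u t : ℝ) : ℝ :=
  max (Phi (u - t) - Phi (ℓ + t) - (1 - ε)) 0

lemma g_eq_integral_gIntegrand (ε ℓ u : ℝ) : g ε ℓ u = ∫ t in Ioi 0, gIntegrand ε ℓ u t :=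
  rfl

lemma continuous_gIntegrand (ε ℓ u : ℝ) : Continuous (gIntegrand ε ℓ u) :=
  (((continuous_Phi.comp (continuous_sub_left u)).sub
    (continuous_Phi.comp (continuous_const_add ℓ))).sub continuous_const).max continuous_const

lemma gIntegrand_nonneg (ε ℓ u t : ℝ) : 0 ≤ gIntegrand ε ℓ u t :=
  le_max_right _ _

lemma gIntegrand_le_one {ε : ℝ} (hε : ε ≤ 1) (ℓ u t : ℝ) : gIntegrand ε ℓ u t ≤ 1 :=
  max_le (by linarith [Phi_le_one (u - t), Phi_nonneg (ℓ + t)]) zero_le_one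

lemma gIntegrand_eq_zero {ε ℓ t : ℝ} (h : ε ≤ Phi (ℓ + t)) (u : ℝ) : gIntegrand ε ℓ u t = 0 :=
  max_eq_right (by linarith [Phi_le_one (u - t)])

lemma gIntegrand_le_indicator {ε ℓ x₀ C t : ℝ} (hε : ε ≤ 1) (hx₀ : ε ≤ Phi x₀) (hℓ : -C ≤ ℓ)
    (ht : 0 < t) (u : ℝ) : gIntegrand ε ℓ u t ≤ (Ioc 0 (x₀ + C)).indicator 1 t := by
  by_cases htT : t ≤ x₀ + C
  · rw [indicator_of_mem (show t ∈ Ioc 0 (x₀ + C) from ⟨ht, htT⟩), Pi.one_apply]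
    exact gIntegrand_le_one hε ℓ u t
  · rw [indicator_of_notMem fun h => htT h.2,
      gIntegrand_eq_zero (hx₀.trans (monotone_Phi (by linarith))) u]

lemma tendsto_gIntegrand {ε L : ℝ} {ℓ u : ℕ → ℝ} (hℓ : Tendsto ℓ atTop (𝓝 L))
    (hu : Tendsto u atTop atTop) (t : ℝ) :
    Tendsto (fun n => gIntegrand ε (ℓ n) (u n) t) atTop (𝓝 (max (ε - Phi (L + t)) 0)) := by
  have hΦu : Tendsto (fun n => Phi (u n - t)) atTop (𝓝 1) :=
    tendsto_Phi_atTop.comp (tendsto_atTop_add_const_right _ (-t) hu)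
  have hΦℓ : Tendsto (fun n => Phi (ℓ n + t)) atTop (𝓝 (Phi (L + t))) :=
    (continuous_Phi.tendsto _).comp (hℓ.add_const t)
  have h := ((hΦu.sub hΦℓ).sub (tendsto_const_nhds (x := 1 - ε))).max
    (tendsto_const_nhds (x := (0 : ℝ)))
  rwa [show 1 - Phi (L + t) - (1 - ε) = ε - Phi (L + t) by ring] at h

lemma tendsto_g_gunder {ε L : ℝ} (hε : ε < 1) {ℓ u : ℕ → ℝ} (hℓ : Tendsto ℓ atTop (𝓝 L))
    (hu : Tendsto u atTop atTop) :
    Tendsto (fun n => g ε (ℓ n) (u n)) atTop (𝓝 (gunder ε L)) := by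
  obtain ⟨C, hC⟩ : ∃ C, ∀ n, -C ≤ ℓ n := by
    obtain ⟨c, hc⟩ := hℓ.bddBelow_range
    exact ⟨-c, fun n => by simpa using hc ⟨n, rfl⟩⟩
  obtain ⟨x₀, hx₀⟩ : ∃ x₀, ε ≤ Phi x₀ :=
    (tendsto_Phi_atTop.eventually (eventually_ge_nhds hε)).exists
  have hbound : Integrable ((Ioc 0 (x₀ + C)).indicator 1) (volume.restrict (Ioi (0 : ℝ))) :=
    (integrable_indicator_iff measurableSet_Ioc).2
      (integrableOn_const (C := (1 : ℝ))
        ((Measure.restrict_apply_le _ _).trans_lt measure_Ioc_lt_top).ne)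
  simp_rw [g_eq_integral_gIntegrand]
  refine tendsto_integral_of_dominated_convergence _
    (fun n => (continuous_gIntegrand _ _ _).aestronglyMeasurable) hbound (fun n => ?_)
    (ae_of_all _ (tendsto_gIntegrand hℓ hu))
  refine (ae_restrict_iff' measurableSet_Ioi).2 (ae_of_all _ fun t ht => ?_)
  rw [Real.norm_of_nonneg (gIntegrand_nonneg _ _ _ _)]
  exact gIntegrand_le_indicator hε.le hx₀ (hC n) ht _

theorem stmt_13_general (ε δ : ℝ) (hε : ε ∈ Set.Ioo (0:ℝ) (1/2))
    (ℓ u : ℕ → ℝ) (hcurve : ∀ n, g ε (ℓ n) (u n) = δ)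
    (hutop : Filter.Tendsto u Filter.atTop Filter.atTop)
    (hℓbdd : ∃ C : ℝ, ∀ n, |ℓ n| ≤ C)
    (lstar : ℝ)
    (huniq : ∀ ℓ' : ℝ, gunder ε ℓ' = δ → ℓ' = lstar) :
    Filter.Tendsto ℓ Filter.atTop (nhds lstar) := by
  obtain ⟨C, hC⟩ := hℓbdd
  refine tendsto_of_subseq_tendsto fun ns hns => ?_
  obtain ⟨a, -, φ, hφ, hlim⟩ :=
    tendsto_subseq_of_bounded (Metric.isBounded_Icc (-C) C) fun n => abs_le.1 (hC (ns n))
  have hg : Tendsto (fun k => g ε (ℓ (ns (φ k))) (u (ns (φ k)))) atTop (𝓝 (gunder ε a)) :=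
    tendsto_g_gunder (by linarith [hε.2]) hlim (hutop.comp (hns.comp hφ.tendsto_atTop))
  simp only [hcurve] at hg
  rw [huniq a (tendsto_nhds_unique hg tendsto_const_nhds)] at hlim
  exact ⟨φ, hlim⟩

theorem stmt_13 (ε δ : ℝ) (hε : ε ∈ Set.Ioo (0:ℝ) (1/2)) (hδ : 0 < δ)
    (ℓ u : ℕ → ℝ) (hcurve : ∀ n, g ε (ℓ n) (u n) = δ)
    (humono : Monotone u) (hutop : Filter.Tendsto u Filter.atTop Filter.atTop)
    (hℓbdd : ∃ C : ℝ, ∀ n, |ℓ n| ≤ C)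
    (lstar : ℝ) (hlstar : gunder ε lstar = δ)
    (huniq : ∀ ℓ' : ℝ, gunder ε ℓ' = δ → ℓ' = lstar) :
    Filter.Tendsto ℓ Filter.atTop (nhds lstar) :=
  stmt_13_general ε δ hε ℓ u hcurve hutop hℓbdd lstar huniq
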